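/- Let A be a Hopf algebra with admissible datum (g, α). Then the condition 'α ⇀ a ↼ α = g a g for all a ∈ A' holds if and only if 'b ↼ α = g b g for all b in the coinvariant subalgebra B = {b ∈ A : α ⇀ b = b}', given that the multiplication map B ⊗ k[Z/2] → A, b ⊗ σ^i ↦ b g^i, is bijective. -/

import Mathlib

open TensorProduct

section Base
variable (k : Type) [Field k]

/-- Koszul sign operator on a tensor product, built from parity involutions. -/
noncomputable def koszul {M N : Type} [AddCommGroup M] [Module k M] [AddCommGroup N] [Module k N]
    (J₁ : M →ₗ[k] M) (J₂ : N →ₗ[k] N) : M ⊗[k] N →ₗ[k] M ⊗[k] N :=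
  (2:k)⁻¹ • (LinearMap.id + TensorProduct.map J₁ LinearMap.id
      + TensorProduct.map LinearMap.id J₂ - TensorProduct.map J₁ J₂)

variable (A : Type) [Ring A] [Algebra k A]

/-- Signed ("super") multiplication `(A ⊗ A) ⊗ (A ⊗ A) → A ⊗ A`,
`(a ⊗ b) ⊗ (c ⊗ d) ↦ (−1)^{|b||c|} (ac) ⊗ (bd)`. -/
noncomputable def tensorSuperMul (J : A →ₗ[k] A) :
    (A ⊗[k] A) ⊗[k] (A ⊗[k] A) →ₗ[k] A ⊗[k] A :=
  TensorProduct.map (LinearMap.mul' k A) (LinearMap.mul' k A)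
    ∘ₗ koszul k (TensorProduct.map LinearMap.id J) (TensorProduct.map J LinearMap.id)
    ∘ₗ (TensorProduct.tensorTensorTensorComm k A A A A).toLinearMap

/-- A Hopf superalgebra, encoded by its parity involution `J` (the grading is by
`J`-eigenspaces: even part `{a | J a = a}`, odd part `{a | J a = -a}`). -/
structure HopfSuperData : Type where
  J : A →ₐ[k] A
  J_invol : ∀ a, J (J a) = a
  comul : A →ₗ[k] A ⊗[k] A
  counit : A →ₗ[k] k
  antipode : A →ₗ[k] A
  comul_J : ∀ a, comul (J a) = TensorProduct.map J.toLinearMap J.toLinearMap (comul a)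
  counit_J : ∀ a, counit (J a) = counit a
  antipode_J : ∀ a, antipode (J a) = J (antipode a)
  coassoc : (TensorProduct.assoc k A A A).toLinearMap ∘ₗ comul.rTensor A ∘ₗ comul
      = comul.lTensor A ∘ₗ comul
  rTensor_counit_comul : ∀ a, (TensorProduct.lid k A) (counit.rTensor A (comul a)) = a
  lTensor_counit_comul : ∀ a, (TensorProduct.rid k A) (counit.lTensor A (comul a)) = a
  comul_one : comul 1 = 1 ⊗ₜ[k] 1
  counit_one : counit 1 = 1
  counit_mul : ∀ a b, counit (a * b) = counit a * counit b
  comul_mul : ∀ a b, comul (a * b) = tensorSuperMul k A J.toLinearMap (comul a ⊗ₜ[k] comul b)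
  mul_antipode_rTensor_comul :
      ∀ a, LinearMap.mul' k A (antipode.rTensor A (comul a)) = algebraMap k A (counit a)
  mul_antipode_lTensor_comul :
      ∀ a, LinearMap.mul' k A (antipode.lTensor A (comul a)) = algebraMap k A (counit a)

variable {k A}

namespace HopfSuperData

variable {B : Type} [Ring B] [Algebra k B]

/-- The odd part of a Hopf superalgebra is nonzero. -/
def HasOddPart (H : HopfSuperData k A) : Prop := ∃ a : A, a ≠ 0 ∧ H.J a = -a

/-- Purely even Hopf superalgebras, i.e. ordinary Hopf algebras. -/
def PurelyEven (H : HopfSuperData k A) : Prop := ∀ a : A, H.J a = a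

/-- Even group-like elements. -/
def IsGroupLike (H : HopfSuperData k A) (g : A) : Prop :=
  H.J g = g ∧ H.counit g = 1 ∧ H.comul g = g ⊗ₜ[k] g

/-- An algebra isomorphism is an isomorphism of Hopf superalgebras if it preserves the
grading, the comultiplication and the counit. -/
def IsIso (H : HopfSuperData k A) (H' : HopfSuperData k B) (e : A ≃ₐ[k] B) : Prop :=
  (∀ a, e (H.J a) = H'.J (e a)) ∧
  (∀ a, H'.comul (e a) = TensorProduct.map e.toLinearMap e.toLinearMap (H.comul a)) ∧
  (∀ a, H'.counit (e a) = H.counit a)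

end HopfSuperData

end Base
section Ext
variable {k : Type} [Field k] {A A' : Type} [Ring A] [Algebra k A] [Ring A'] [Algebra k A']

namespace HopfSuperData

/-- The part of the comultiplication whose second tensor leg is even. -/
noncomputable def comulEvenPart (H : HopfSuperData k A) : A →ₗ[k] A ⊗[k] A :=
  (2:k)⁻¹ • (H.comul + H.J.toLinearMap.lTensor A ∘ₗ H.comul)

/-- The part of the comultiplication whose second tensor leg is odd. -/
noncomputable def comulOddPart (H : HopfSuperData k A) : A →ₗ[k] A ⊗[k] A :=
  (2:k)⁻¹ • (H.comul - H.J.toLinearMap.lTensor A ∘ₗ H.comul)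

/-- `J^i` for `i : ZMod 2`. -/
noncomputable def Jpow (H : HopfSuperData k A) (i : ZMod 2) : A →ₗ[k] A :=
  if i = 0 then LinearMap.id else H.J.toLinearMap

/-- `β i a` represents `a # σ^i` in the bosonization `H # k[ℤ/2]`: this predicate says that
an ordinary Hopf algebra `B`, with structural maps given by Mathlib's `HopfAlgebra` class,
is (a realization of) the Radford–Majid bosonization of the Hopf superalgebra `H`. -/
structure IsBosonization {B : Type} [Ring B] [HopfAlgebra k B]
    (H : HopfSuperData k A) (β : ZMod 2 → A →ₗ[k] B) : Prop where
  bij : Function.Bijective fun p : A × A => β 0 p.1 + β 1 p.2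
  map_one : β 0 1 = 1
  map_mul : ∀ (i j : ZMod 2) (a a' : A), β i a * β j a' = β (i + j) (a * H.Jpow i a')
  map_comul : ∀ (i : ZMod 2) (a : A), Coalgebra.comul (β i a) =
      TensorProduct.map (β i) (β i) (H.comulEvenPart a)
      + TensorProduct.map (β (i+1)) (β i) (H.comulOddPart a)
  map_counit : ∀ (i : ZMod 2) (a : A), Coalgebra.counit (β i a) = H.counit a

end HopfSuperData

/-- Evaluation of a bilinear pairing on tensor squares:
`(a ⊗ a') ⊗ (b ⊗ b') ↦ ⟨a,b⟩⟨a',b'⟩`. -/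
noncomputable def pairTensor (Bp : A →ₗ[k] A' →ₗ[k] k) :
    (A ⊗[k] A) ⊗[k] (A' ⊗[k] A') →ₗ[k] k :=
  LinearMap.mul' k k
    ∘ₗ TensorProduct.map (TensorProduct.lift Bp) (TensorProduct.lift Bp)
    ∘ₗ (TensorProduct.tensorTensorTensorComm k A A A' A').toLinearMap

/-- A Hopf (super)pairing between two Hopf superalgebras. -/
structure IsHopfPairing (H : HopfSuperData k A) (H' : HopfSuperData k A')
    (Bp : A →ₗ[k] A' →ₗ[k] k) : Prop where
  parity : ∀ a a', Bp (H.J a) (H'.J a') = Bp a a'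
  pair_mul_right : ∀ (a : A) (b b' : A'),
    Bp a (b * b') = pairTensor Bp (H.comul a ⊗ₜ[k] (b ⊗ₜ[k] b'))
  pair_mul_left : ∀ (a a' : A) (b : A'),
    Bp (a * a') b = pairTensor Bp ((a ⊗ₜ[k] a') ⊗ₜ[k] H'.comul b)
  pair_one_right : ∀ a, Bp a 1 = H.counit a
  pair_one_left : ∀ b, Bp 1 b = H'.counit b

/-- Nondegeneracy of a bilinear pairing. -/
def PairNondeg (Bp : A →ₗ[k] A' →ₗ[k] k) : Prop :=
  (∀ a, (∀ b, Bp a b = 0) → a = 0) ∧ (∀ b, (∀ a, Bp a b = 0) → b = 0)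

end Ext

section Ord
variable (k : Type) [Field k] {A : Type} [AddCommGroup A] [Module k A] [Coalgebra k A]

/-- The right hit action `α ⇀ a = a₍₁₎ α(a₍₂₎)`. -/
noncomputable def hitR (α : A →ₗ[k] k) : A →ₗ[k] A :=
  (TensorProduct.rid k A).toLinearMap ∘ₗ α.lTensor A ∘ₗ Coalgebra.comul

/-- The left hit action `a ↼ α = α(a₍₁₎) a₍₂₎`. -/
noncomputable def hitL (α : A →ₗ[k] k) : A →ₗ[k] A :=
  (TensorProduct.lid k A).toLinearMap ∘ₗ α.rTensor A ∘ₗ Coalgebra.comul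

/-- Convolution product of two functionals on a coalgebra. -/
noncomputable def conv (α β : A →ₗ[k] k) : A →ₗ[k] k :=
  LinearMap.mul' k k ∘ₗ TensorProduct.map α β ∘ₗ Coalgebra.comul

/-- Group-like element of an ordinary coalgebra. -/
def OrdGroupLike (g : A) : Prop :=
  Coalgebra.counit g = (1:k) ∧ Coalgebra.comul g = g ⊗ₜ[k] g

end Ord

section Adm
variable (k : Type) [Field k] {A : Type} [Ring A] [HopfAlgebra k A]

/-- An admissible datum `(g, α)` for a Hopf algebra `A`: `g` is a group-like of order 2,
`α` is a character of convolution-order 2, and `α g = -1`. -/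
def IsAdmissible (g : A) (α : A →ₐ[k] k) : Prop :=
  OrdGroupLike k g ∧ g * g = 1 ∧ g ≠ 1
    ∧ conv k α.toLinearMap α.toLinearMap = Coalgebra.counit
    ∧ α.toLinearMap ≠ Coalgebra.counit ∧ α g = -1

end Adm

section GA
variable (k : Type) [Field k] (M : Type) [Monoid M]

/-- Comultiplication of the group (monoid) algebra: every `of g` is group-like. -/
noncomputable def gaComul : MonoidAlgebra k M →ₗ[k] MonoidAlgebra k M ⊗[k] MonoidAlgebra k M :=
  Finsupp.lsum k (fun g =>
    LinearMap.toSpanSingleton k _ (MonoidAlgebra.of k M g ⊗ₜ[k] MonoidAlgebra.of k M g))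
    ∘ₗ (MonoidAlgebra.coeffLinearEquiv k).toLinearMap

/-- Counit of the group (monoid) algebra. -/
noncomputable def gaCounit : MonoidAlgebra k M →ₗ[k] k :=
  Finsupp.lsum k (fun _ : M => (LinearMap.id : k →ₗ[k] k))
    ∘ₗ (MonoidAlgebra.coeffLinearEquiv k).toLinearMap

end GA
section KZ2
variable (k : Type) [Field k]

/-- The group algebra `k[ℤ/2]`. -/
abbrev KZ2 : Type := MonoidAlgebra k (Multiplicative (ZMod 2))

/-- The basis element `σ^i` of `k[ℤ/2]`. -/
noncomputable def sigmaPow (i : ZMod 2) : KZ2 k :=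
  MonoidAlgebra.of k (Multiplicative (ZMod 2)) (Multiplicative.ofAdd i)

variable {A : Type} [AddCommGroup A] [Module k A] [Coalgebra k A]

/-- The map `π : A → k[ℤ/2]`, `a ↦ (ε(a)/2)(e + σ) + (α(a)/2)(e − σ)`,
associated to a character `α`. -/
noncomputable def piMap (α : A →ₗ[k] k) : A →ₗ[k] KZ2 k :=
  (2:k)⁻¹ • (LinearMap.smulRight (Coalgebra.counit (R := k) (A := A))
        (sigmaPow k 0 + sigmaPow k 1)
      + LinearMap.smulRight α (sigmaPow k 0 - sigmaPow k 1))

end KZ2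
section S19
variable (k : Type) [Field k] {A : Type} [Ring A] [HopfAlgebra k A]

/-- The coinvariant subalgebra `B = {b : α ⇀ b = b}` of an admissible datum. -/
noncomputable def coinvSub (α : A →ₗ[k] k) : Submodule k A :=
  LinearMap.ker (hitR k α - LinearMap.id)

/-- The linear map `k[ℤ/2] → A`, `σ^i ↦ g^i`. -/
noncomputable def gPow (g : A) : KZ2 k →ₗ[k] A :=
  Finsupp.lsum k (fun x : Multiplicative (ZMod 2) =>
    LinearMap.toSpanSingleton k A (g ^ (Multiplicative.toAdd x).val))
    ∘ₗ (MonoidAlgebra.coeffLinearEquiv k).toLinearMap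

/-- The multiplication map `B ⊗ k[ℤ/2] → A`, `b ⊗ σ^i ↦ b g^i`. -/
noncomputable def multMap (α : A →ₗ[k] k) (g : A) :
    (coinvSub k α) ⊗[k] KZ2 k →ₗ[k] A :=
  LinearMap.mul' k A ∘ₗ TensorProduct.map (coinvSub k α).subtype (gPow k g)

end S19

section AuxStmt19

variable {k : Type} [Field k] {A : Type} [Ring A] [HopfAlgebra k A]

lemma hitR_repr {ι : Type*} (α : A →ₗ[k] k) {a : A} (r : Coalgebra.Repr k a ι) :
    hitR k α a = ∑ i ∈ r.index, α (r.right i) • r.left i := by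
  simp only [hitR, LinearMap.coe_comp, Function.comp_apply, LinearEquiv.coe_coe]
  rw [show Coalgebra.comul a = ∑ i ∈ r.index, r.left i ⊗ₜ[k] r.right i from r.eq.symm]
  simp [map_sum]

lemma hitL_repr {ι : Type*} (α : A →ₗ[k] k) {a : A} (r : Coalgebra.Repr k a ι) :
    hitL k α a = ∑ i ∈ r.index, α (r.left i) • r.right i := by
  simp only [hitL, LinearMap.coe_comp, Function.comp_apply, LinearEquiv.coe_coe]
  rw [show Coalgebra.comul a = ∑ i ∈ r.index, r.left i ⊗ₜ[k] r.right i from r.eq.symm]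
  simp [map_sum]

/-- A representation of `comul (a * b)` built from representations of `comul a`, `comul b`. -/
noncomputable def mulRepr {ι κ : Type*} {a b : A} (r : Coalgebra.Repr k a ι)
    (s : Coalgebra.Repr k b κ) :
    Coalgebra.Repr k (a * b) (ι × κ) where
  index := r.index ×ˢ s.index
  left p := r.left p.1 * s.left p.2
  right p := r.right p.1 * s.right p.2
  eq := by
    show _ = Coalgebra.comul (a * b)
    rw [Bialgebra.comul_mul, ← r.eq, ← s.eq, Finset.sum_mul_sum, Finset.sum_product]
    simp [Algebra.TensorProduct.tmul_mul_tmul]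

lemma hitR_mul (α : A →ₐ[k] k) (a b : A) :
    hitR k α.toLinearMap (a * b) = hitR k α.toLinearMap a * hitR k α.toLinearMap b := by
  classical
  set ra := Coalgebra.Repr.arbitrary k a with hra
  set rb := Coalgebra.Repr.arbitrary k b with hrb
  calc hitR k α.toLinearMap (a * b)
      = ∑ p ∈ ra.index ×ˢ rb.index,
          α (ra.right p.1 * rb.right p.2) • (ra.left p.1 * rb.left p.2) :=
        hitR_repr _ (mulRepr ra rb)
    _ = ∑ i ∈ ra.index, ∑ j ∈ rb.index,
          α (ra.right i * rb.right j) • (ra.left i * rb.left j) := Finset.sum_product ..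
    _ = hitR k α.toLinearMap a * hitR k α.toLinearMap b := by
        rw [hitR_repr _ ra, hitR_repr _ rb, Finset.sum_mul_sum]
        refine Finset.sum_congr rfl fun i _ => Finset.sum_congr rfl fun j _ => ?_
        rw [smul_mul_smul_comm]
        simp [map_mul]

lemma hitL_mul (α : A →ₐ[k] k) (a b : A) :
    hitL k α.toLinearMap (a * b) = hitL k α.toLinearMap a * hitL k α.toLinearMap b := by
  classical
  set ra := Coalgebra.Repr.arbitrary k a with hra
  set rb := Coalgebra.Repr.arbitrary k b with hrb
  calc hitL k α.toLinearMap (a * b)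
      = ∑ p ∈ ra.index ×ˢ rb.index,
          α (ra.left p.1 * rb.left p.2) • (ra.right p.1 * rb.right p.2) :=
        hitL_repr _ (mulRepr ra rb)
    _ = ∑ i ∈ ra.index, ∑ j ∈ rb.index,
          α (ra.left i * rb.left j) • (ra.right i * rb.right j) := Finset.sum_product ..
    _ = hitL k α.toLinearMap a * hitL k α.toLinearMap b := by
        rw [hitL_repr _ ra, hitL_repr _ rb, Finset.sum_mul_sum]
        refine Finset.sum_congr rfl fun i _ => Finset.sum_congr rfl fun j _ => ?_
        rw [smul_mul_smul_comm]
        simp [map_mul]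

lemma hitR_hitL_comm (α : A →ₗ[k] k) (a : A) :
    hitR k α (hitL k α a) = hitL k α (hitR k α a) := by
  classical
  set r := Coalgebra.Repr.arbitrary k a with hr
  set L := fun i : r.ι => Coalgebra.Repr.arbitrary k (r.left i) with hL
  set R := fun i : r.ι => Coalgebra.Repr.arbitrary k (r.right i) with hR
  have key := Coalgebra.sum_tmul_tmul_eq r L R
  -- apply the linear map `x ⊗ (y ⊗ z) ↦ α x • (α z • y)` to `key`
  set inner : A ⊗[k] A →ₗ[k] A :=
    (TensorProduct.rid k A).toLinearMap ∘ₗ LinearMap.lTensor A α with hinner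
  set φ : A ⊗[k] (A ⊗[k] A) →ₗ[k] A :=
    (TensorProduct.lid k A).toLinearMap ∘ₗ LinearMap.rTensor A α
      ∘ₗ LinearMap.lTensor A inner with hφ
  have hφt : ∀ x y z : A, φ (x ⊗ₜ[k] (y ⊗ₜ[k] z)) = α x • (α z • y) := by
    intro x y z
    simp only [hφ, hinner, LinearMap.coe_comp, Function.comp_apply, LinearMap.lTensor_tmul,
      LinearMap.rTensor_tmul, LinearEquiv.coe_coe, TensorProduct.lid_tmul,
      TensorProduct.rid_tmul, map_smul]
  have key2 := congrArg φ key
  simp only [map_sum, hφt] at key2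
  calc hitR k α (hitL k α a)
      = ∑ i ∈ r.index, α (r.left i) • hitR k α (r.right i) := by
        rw [hitL_repr α r, map_sum]; simp
    _ = ∑ i ∈ r.index, ∑ j ∈ (R i).index,
          α (r.left i) • (α ((R i).right j) • (R i).left j) := by
        refine Finset.sum_congr rfl fun i _ => ?_
        rw [hitR_repr α (R i), Finset.smul_sum]
    _ = ∑ i ∈ r.index, ∑ j ∈ (L i).index,
          α ((L i).left j) • (α (r.right i) • (L i).right j) := key2.symm
    _ = ∑ i ∈ r.index, α (r.right i) • hitL k α (r.left i) := by
        refine Finset.sum_congr rfl fun i _ => ?_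
        rw [hitL_repr α (L i), Finset.smul_sum]
        exact Finset.sum_congr rfl fun j _ => smul_comm _ _ _
    _ = hitL k α (hitR k α a) := by
        rw [hitR_repr α r, map_sum]; simp

lemma hitR_grouplike (α : A →ₗ[k] k) {g : A} (hg : Coalgebra.comul g = g ⊗ₜ[k] g) :
    hitR k α g = α g • g := by
  simp [hitR, hg]

lemma hitL_grouplike (α : A →ₗ[k] k) {g : A} (hg : Coalgebra.comul g = g ⊗ₜ[k] g) :
    hitL k α g = α g • g := by
  simp [hitL, hg]

end AuxStmt19

/-- Let `A` be a Hopf algebra with admissible datum `(g, α)`. Then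
`α ⇀ a ↼ α = g a g` for all `a ∈ A` if and only if `b ↼ α = g b g` for all `b` in the
coinvariant subalgebra `B = {b : α ⇀ b = b}`, given that the multiplication map
`B ⊗ k[ℤ/2] → A`, `b ⊗ σ^i ↦ b g^i`, is bijective. -/
theorem stmt19 (k : Type) [Field k] (hchar : (2:k) ≠ 0)
    (A : Type) [Ring A] [HopfAlgebra k A] (g : A) (α : A →ₐ[k] k)
    (hadm : IsAdmissible k g α)
    (hbij : Function.Bijective (multMap k α.toLinearMap g)) :
    (∀ a : A, hitR k α.toLinearMap (hitL k α.toLinearMap a) = g * a * g)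
    ↔ (∀ b ∈ coinvSub k α.toLinearMap, hitL k α.toLinearMap b = g * b * g) := by
  obtain ⟨⟨hgcounit, hgcomul⟩, hg2, hg1, hα2, hαε, hαg⟩ := hadm
  have hmem : ∀ b : A, b ∈ coinvSub k α.toLinearMap ↔ hitR k α.toLinearMap b = b := by
    intro b
    simp [coinvSub, LinearMap.mem_ker, sub_eq_zero]
  constructor
  · intro h b hb
    calc hitL k α.toLinearMap b
        = hitL k α.toLinearMap (hitR k α.toLinearMap b) := by rw [(hmem b).1 hb]
      _ = hitR k α.toLinearMap (hitL k α.toLinearMap b) := (hitR_hitL_comm _ _).symm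
      _ = g * b * g := h b
  · intro hB a
    obtain ⟨t, ht⟩ := hbij.2 a
    rw [← ht]
    clear ht
    -- the property is linear in `a`
    set P : A → Prop := fun a =>
      hitR k α.toLinearMap (hitL k α.toLinearMap a) = g * a * g with hP
    have Padd : ∀ x y, P x → P y → P (x + y) := by
      intro x y hx hy
      simp only [hP, map_add, mul_add, add_mul] at *
      rw [hx, hy]
    have Psmul : ∀ (c : k) (x), P x → P (c • x) := by
      intro c x hx
      simp only [hP, map_smul] at *
      rw [hx, mul_smul_comm, smul_mul_assoc]
    have Pzero : P 0 := by simp [hP]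
    -- key case: `P (b * g ^ n)` for `b` coinvariant
    have Pkey : ∀ (b : A), b ∈ coinvSub k α.toLinearMap → ∀ n : ℕ, P (b * g ^ n) := by
      intro b hb n
      have hbR : hitR k α.toLinearMap b = b := (hmem b).1 hb
      have hbkey : hitR k α.toLinearMap (hitL k α.toLinearMap b) = g * b * g := by
        rw [hitR_hitL_comm, hbR, hB b hb]
      have hgpow : ∀ m : ℕ, g ^ m = 1 ∨ g ^ m = g := by
        intro m
        induction m with
        | zero => left; exact pow_zero g
        | succ m ih =>
          rcases ih with h | h
          · right; rw [pow_succ, h, one_mul]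
          · left; rw [pow_succ, h, hg2]
      have hgkey : hitR k α.toLinearMap (hitL k α.toLinearMap g) = g := by
        rw [hitL_grouplike _ hgcomul, map_smul, hitR_grouplike _ hgcomul, smul_smul]
        have : (α.toLinearMap g : k) = -1 := hαg
        rw [this]
        norm_num
      rcases hgpow n with h | h
      · simp only [hP, h, mul_one]
        exact hbkey
      · simp only [hP, h]
        rw [hitL_mul, hitR_mul, hbkey, hgkey]
        simp [mul_assoc]
    have Pall : ∀ t, P (multMap k α.toLinearMap g t) := by
      intro t
      induction t using TensorProduct.induction_on with
      | zero => simpa using Pzero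
      | add x y hx hy => rw [map_add]; exact Padd _ _ hx hy
      | tmul b x =>
        have hmm : ∀ y : KZ2 k, multMap k α.toLinearMap g (b ⊗ₜ[k] y)
            = (b : A) * gPow k g y := by
          intro y
          simp [multMap]
        rw [hmm]
        induction x using MonoidAlgebra.induction_linear with
        | zero => simpa [map_zero] using Pzero
        | add f h hf hh => rw [map_add, mul_add]; exact Padd _ _ hf hh
        | single m c =>
          have : gPow k g (MonoidAlgebra.single m c) = c • g ^ (Multiplicative.toAdd m).val := by
            change (Finsupp.lsum k fun x : Multiplicative (ZMod 2) =>
              LinearMap.toSpanSingleton k A (g ^ (Multiplicative.toAdd x).val))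
              (Finsupp.single m c) = _
            rw [Finsupp.lsum_single]
            rfl
          rw [this, mul_smul_comm]
          exact Psmul _ _ (Pkey b b.2 _)
    exact Pall t
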